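/- arXiv:2303.09532 — 3 statements merged into one kernel-verified Lean document; each statement's English description precedes it below -/
import Mathlib

section
/- Let f : ℝⁿ → ℝ be C¹ and strictly convex with unique global minimizer ȳ, φ : ℝⁿ → ℝ C², strictly convex, Legendre type, with conjugate φ*; set x̄ := ∇φ(ȳ), V(x) := D_{φ*}(x, x̄), q(x, u) := f(∇φ*(x)) + f*(−u) + ⟨u, ȳ⟩. Let u : [0, ∞) → ℝⁿ be locally integrable and let x : [0, ∞) → ℝⁿ satisfy x(0) = x₀ and ẋ(s) = u(s) for almost every s. Then for every t ≥ 0, ∫₀ᵗ q(x(s), u(s)) ds ≥ V(x₀) − V(x(t)). -/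
open scoped RealInnerProductSpace
open Filter MeasureTheory

/-- Legendre–Fenchel conjugate: `ψ*(v) = sup_x { ⟨v, x⟩ − ψ(x) }`. -/
noncomputable def fenchel {n : ℕ} (ψ : EuclideanSpace ℝ (Fin n) → ℝ)
    (v : EuclideanSpace ℝ (Fin n)) : ℝ :=
  ⨆ z : EuclideanSpace ℝ (Fin n), (⟪v, z⟫ - ψ z)

/-- Bregman divergence: `D_ψ(y, y') = ψ(y) − ψ(y') − ⟨∇ψ(y'), y − y'⟩`. -/
noncomputable def bregman {n : ℕ} (ψ : EuclideanSpace ℝ (Fin n) → ℝ)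
    (y y' : EuclideanSpace ℝ (Fin n)) : ℝ :=
  ψ y - ψ y' - ⟪gradient ψ y', y - y'⟫

/-- `φ` is of Legendre type: `|∇φ(x)| → ∞` as `|x| → ∞`. -/
def LegendreType {n : ℕ} (φ : EuclideanSpace ℝ (Fin n) → ℝ) : Prop :=
  Tendsto (fun z => ‖gradient φ z‖) (cocompact (EuclideanSpace ℝ (Fin n))) atTop

/-!
Fenchel–Young for `f` at the pair `(-u, ∇φ*(x))` gives `q(x, u) ≥ -⟪∇φ*(x) - ȳ, u⟫`, and since
`∇φ*(x̄) = ȳ` the right-hand side is `-⟪∇V(x), u⟫`. Along the trajectory, `V ∘ x` is absolutely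
continuous (`V` is `C¹` and `x` is a primitive of an integrable function) with derivative
`⟪∇V(x(s)), u(s)⟫` almost everywhere, so integrating the pointwise bound gives the claim.

`φ*` is differentiable because `∇φ` is a homeomorphism: injective by strict convexity, proper by
the Legendre condition, and surjective because the Legendre condition makes `φ - ⟪v, ·⟫` attain its
minimum over a large ball at an interior point. At `v = ∇φ(y)` the supremum defining `φ*(v)` is
attained at `y`, so `φ*` satisfies the subgradient inequality with the continuous subgradient
`(∇φ)⁻¹`, which is therefore its gradient.
-/

open scoped NNReal
open Set Topology

section Convex

variable {E : Type*} [NormedAddCommGroup E] [InnerProductSpace ℝ E] [CompleteSpace E]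
  {ψ : E → ℝ} {s : Set E} {a b g g' : E}

theorem ConvexOn.add_inner_sub_le_of_hasGradientAt (hψ : ConvexOn ℝ s ψ) (ha : a ∈ s)
    (hb : b ∈ s) (hg : HasGradientAt ψ g a) : ψ a + ⟪g, b - a⟫ ≤ ψ b := by
  set L : ℝ →ᵃ[ℝ] E := AffineMap.lineMap a b
  have hline : ConvexOn ℝ (Icc 0 1) (ψ ∘ L) :=
    (hψ.comp_affineMap L).subset
      (fun τ hτ => (convex_iff_segment_subset.1 hψ.1 ha hb) (segment_eq_image_lineMap ℝ a b ▸
        mem_image_of_mem _ hτ)) (convex_Icc 0 1)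
  have hderiv : HasDerivAt (ψ ∘ L) ⟪g, b - a⟫ 0 := by
    have hg0 := hasGradientAt_iff_hasFDerivAt.1 hg
    rw [← AffineMap.lineMap_apply_zero a b (k := ℝ)] at hg0
    simpa using hg0.comp_hasDerivAt 0 AffineMap.hasDerivAt_lineMap
  have := hline.le_slope_of_hasDerivAt (left_mem_Icc.2 zero_le_one)
    (right_mem_Icc.2 zero_le_one) one_pos hderiv
  simp only [slope_def_field, Function.comp_apply, sub_zero, div_one, L,
    AffineMap.lineMap_apply_zero, AffineMap.lineMap_apply_one] at this
  linarith

theorem ConvexOn.inner_sub_le_of_hasGradientAt (hψ : ConvexOn ℝ univ ψ)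
    (hg : HasGradientAt ψ g a) (b : E) : ⟪g, b⟫ - ψ b ≤ ⟪g, a⟫ - ψ a := by
  have := hψ.add_inner_sub_le_of_hasGradientAt (mem_univ a) (mem_univ b) hg
  rw [inner_sub_right] at this
  linarith

theorem ConvexOn.inner_sub_nonneg_of_hasGradientAt (hψ : ConvexOn ℝ s ψ) (ha : a ∈ s)
    (hb : b ∈ s) (hg : HasGradientAt ψ g a) (hg' : HasGradientAt ψ g' b) :
    0 ≤ ⟪g' - g, b - a⟫ := by
  have h₁ := hψ.add_inner_sub_le_of_hasGradientAt ha hb hg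
  have h₂ := hψ.add_inner_sub_le_of_hasGradientAt hb ha hg'
  rw [← neg_sub b a, inner_neg_right] at h₂
  rw [inner_sub_left]
  linarith

theorem StrictConvexOn.injective_gradient (hψ : StrictConvexOn ℝ univ ψ)
    (hd : Differentiable ℝ ψ) : Function.Injective (gradient ψ) := by
  intro a b hab
  by_contra hne
  set m : E := (1 / 2 : ℝ) • a + (1 / 2 : ℝ) • b
  have hmid : ψ m < (1 / 2 : ℝ) • ψ a + (1 / 2 : ℝ) • ψ b :=
    hψ.2 (mem_univ a) (mem_univ b) hne (by norm_num) (by norm_num) (by norm_num)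
  have ha := hψ.convexOn.add_inner_sub_le_of_hasGradientAt (mem_univ a) (mem_univ m)
    (hd a).hasGradientAt
  have hb := hψ.convexOn.add_inner_sub_le_of_hasGradientAt (mem_univ b) (mem_univ m)
    (hd b).hasGradientAt
  have hma : m - a = (1 / 2 : ℝ) • (b - a) := by module
  have hmb : m - b = -((1 / 2 : ℝ) • (b - a)) := by module
  rw [hma] at ha
  rw [hmb, ← hab, inner_neg_right] at hb
  simp only [smul_eq_mul] at hmid
  linarith

theorem IsMinOn.inner_sub_nonneg_of_hasGradientAt (hmin : IsMinOn ψ s a) (hs : Convex ℝ s)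
    (ha : a ∈ s) (hb : b ∈ s) (hg : HasGradientAt ψ g a) : 0 ≤ ⟪g, b - a⟫ := by
  have := hmin.localize.hasFDerivWithinAt_nonneg
    (hasGradientAt_iff_hasFDerivAt.1 hg).hasFDerivWithinAt
    (sub_mem_posTangentConeAt_of_segment_subset (hs.segment_subset ha hb))
  simpa using this

theorem ConvexOn.norm_le_of_isMinOn_closedBall {R : ℝ} {g₀ : E}
    (hψ : ConvexOn ℝ (Metric.closedBall 0 R) ψ) (hR : 0 < R)
    (hmin : IsMinOn ψ (Metric.closedBall 0 R) a) (ha : a ∈ Metric.closedBall 0 R)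
    (hg : HasGradientAt ψ g a) (hg₀ : HasGradientAt ψ g₀ 0) : ‖g‖ ≤ ‖g₀‖ := by
  rcases eq_or_ne g 0 with rfl | hg0
  · simp
  have hgpos : 0 < ‖g‖ := norm_pos_iff.2 hg0
  have h0 : (0 : E) ∈ Metric.closedBall 0 R := Metric.mem_closedBall_self hR.le
  -- test the first-order condition at the boundary point opposite to `g`
  set w : E := -(R / ‖g‖) • g
  have hw : w ∈ Metric.closedBall 0 R := by
    rw [mem_closedBall_zero_iff, norm_smul, norm_neg, Real.norm_of_nonneg (by positivity),
      div_mul_cancel₀ _ hgpos.ne']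
  have hgw : ⟪g, w⟫ = -(R * ‖g‖) := by
    rw [real_inner_smul_right, real_inner_self_eq_norm_sq]
    field_simp
  have hopt := hmin.inner_sub_nonneg_of_hasGradientAt (convex_closedBall 0 R) ha hw hg
  have hmono := hψ.inner_sub_nonneg_of_hasGradientAt h0 ha hg₀ hg
  have hcs : -(‖g₀‖ * R) ≤ ⟪g₀, a⟫ := by
    have := abs_real_inner_le_norm g₀ a
    have := mul_le_mul_of_nonneg_left (mem_closedBall_zero_iff.1 ha) (norm_nonneg g₀)
    linarith [neg_abs_le ⟪g₀, a⟫]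
  rw [inner_sub_right, hgw] at hopt
  rw [sub_zero, inner_sub_left] at hmono
  exact le_of_mul_le_mul_left (by linarith) hR

theorem ConvexOn.exists_eq_zero_of_hasGradientAt [ProperSpace E] {ψ' : E → E}
    (hψ : ConvexOn ℝ univ ψ) (hd : ∀ z, HasGradientAt ψ (ψ' z) z)
    (htend : Tendsto (fun z => ‖ψ' z‖) (cocompact E) atTop) : ∃ a, ψ' a = 0 := by
  obtain ⟨r, hr⟩ := Metric.closedBall_compl_subset_of_mem_cocompact
    (htend.eventually_gt_atTop ‖ψ' 0‖) 0
  have hR : 0 < max r 0 + 1 := by positivity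
  obtain ⟨a, ha, hmin⟩ := (isCompact_closedBall (0 : E) _).exists_isMinOn
    ⟨0, Metric.mem_closedBall_self hR.le⟩
    (continuous_iff_continuousAt.2 fun z => (hd z).continuousAt).continuousOn
  have hle := (hψ.subset (subset_univ _) (convex_closedBall 0 _)).norm_le_of_isMinOn_closedBall
    hR hmin ha (hd a) (hd 0)
  have har : ‖a‖ ≤ r := by
    by_contra! h
    exact (hr (by simpa using h)).not_ge hle
  have hloc : IsLocalMin ψ a := hmin.isLocalMin
    (Metric.closedBall_mem_nhds_of_mem (mem_ball_zero_iff.2 (by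
      linarith [le_max_left r 0])))
  exact ⟨a, by simpa using hloc.hasFDerivAt_eq_zero (hasGradientAt_iff_hasFDerivAt.1 (hd a))⟩

theorem ConvexOn.surjective_gradient [ProperSpace E] (hψ : ConvexOn ℝ univ ψ)
    (hd : Differentiable ℝ ψ)
    (htend : Tendsto (fun z => ‖gradient ψ z‖) (cocompact E) atTop) :
    Function.Surjective (gradient ψ) := by
  intro v
  have hconv : ConvexOn ℝ univ (fun z => ψ z - ⟪v, z⟫) :=
    hψ.sub ((innerₛₗ ℝ v).concaveOn convex_univ)
  have hgrad : ∀ z, HasGradientAt (fun z => ψ z - ⟪v, z⟫) (gradient ψ z - v) z := fun z => by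
    rw [hasGradientAt_iff_hasFDerivAt, map_sub, toDual_gradient]
    exact (hd z).hasFDerivAt.sub ((innerSL ℝ v).hasFDerivAt)
  have htend' : Tendsto (fun z => ‖gradient ψ z - v‖) (cocompact E) atTop :=
    tendsto_atTop_mono (fun z => by linarith [norm_sub_norm_le (gradient ψ z) v])
      (tendsto_atTop_add_const_right _ (-‖v‖) htend)
  obtain ⟨a, ha⟩ := hconv.exists_eq_zero_of_hasGradientAt hgrad htend'
  exact ⟨a, sub_eq_zero.1 ha⟩

theorem StrictConvexOn.isHomeomorph_gradient [ProperSpace E] (hψ : StrictConvexOn ℝ univ ψ)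
    (hC : ContDiff ℝ 1 ψ) (htend : Tendsto (fun z => ‖gradient ψ z‖) (cocompact E) atTop) :
    IsHomeomorph (gradient ψ) := by
  have hd : Differentiable ℝ ψ := hC.differentiable one_ne_zero
  have hcont : Continuous (gradient ψ) :=
    (InnerProductSpace.toDual ℝ E).symm.continuous.comp (hC.continuous_fderiv one_ne_zero)
  have hproper : IsProperMap (gradient ψ) := by
    refine isProperMap_iff_tendsto_cocompact.2 ⟨hcont, ?_⟩
    rw [← Metric.cobounded_eq_cocompact, ← tendsto_norm_atTop_iff_cobounded]
    rwa [Metric.cobounded_eq_cocompact]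
  exact isHomeomorph_iff_continuous_isClosedMap_bijective.2
    ⟨hcont, hproper.isClosedMap, hψ.injective_gradient hd,
      hψ.convexOn.surjective_gradient hd htend⟩

theorem hasGradientAt_of_forall_add_inner_sub_le {F : E → ℝ} {Y : E → E} {v : E}
    (hY : ContinuousAt Y v) (hsub : ∀ v w, F v + ⟪Y v, w - v⟫ ≤ F w) :
    HasGradientAt F (Y v) v := by
  rw [hasGradientAt_iff_isLittleO, Asymptotics.isLittleO_iff]
  intro c hc
  filter_upwards [Metric.tendsto_nhds.1 hY c hc] with w hw
  have hlow := hsub v w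
  have hupp := hsub w v
  rw [← neg_sub w v, inner_neg_right] at hupp
  rw [Real.norm_eq_abs, abs_of_nonneg (by linarith)]
  calc F w - F v - ⟪Y v, w - v⟫ ≤ ⟪Y w - Y v, w - v⟫ := by rw [inner_sub_left]; linarith
    _ ≤ ‖Y w - Y v‖ * ‖w - v‖ := real_inner_le_norm _ _
    _ ≤ c * ‖w - v‖ := by gcongr; rw [← dist_eq_norm]; exact hw.le

end Convex

section Fenchel

variable {n : ℕ} {ψ : EuclideanSpace ℝ (Fin n) → ℝ} {v w y y' : EuclideanSpace ℝ (Fin n)}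

theorem inner_sub_le_fenchel (hψ : BddAbove (range fun z => ⟪v, z⟫ - ψ z))
    (z : EuclideanSpace ℝ (Fin n)) : ⟪v, z⟫ - ψ z ≤ fenchel ψ v :=
  le_ciSup hψ z

theorem ConvexOn.fenchel_eq_of_hasGradientAt (hψ : ConvexOn ℝ univ ψ)
    (hy : HasGradientAt ψ v y) : fenchel ψ v = ⟪v, y⟫ - ψ y :=
  le_antisymm (ciSup_le (hψ.inner_sub_le_of_hasGradientAt hy))
    (inner_sub_le_fenchel ⟨_, forall_mem_range.2 (hψ.inner_sub_le_of_hasGradientAt hy)⟩ y)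

theorem ConvexOn.fenchel_add_inner_sub_le (hψ : ConvexOn ℝ univ ψ)
    (hy : HasGradientAt ψ v y) (hy' : HasGradientAt ψ w y') :
    fenchel ψ v + ⟪y, w - v⟫ ≤ fenchel ψ w := by
  have := inner_sub_le_fenchel
    ⟨_, forall_mem_range.2 (hψ.inner_sub_le_of_hasGradientAt hy')⟩ y
  rw [hψ.fenchel_eq_of_hasGradientAt hy, inner_sub_right, real_inner_comm w y,
    real_inner_comm v y]
  linarith

theorem StrictConvexOn.hasGradientAt_fenchel_gradient (hψ : StrictConvexOn ℝ univ ψ)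
    (hC : ContDiff ℝ 1 ψ) (hleg : LegendreType ψ) (y : EuclideanSpace ℝ (Fin n)) :
    HasGradientAt (fenchel ψ) y (gradient ψ y) := by
  set e := (hψ.isHomeomorph_gradient hC hleg).homeomorph
  have hd : ∀ z, HasGradientAt ψ (gradient ψ z) z :=
    fun z => ((hC.differentiable one_ne_zero) z).hasGradientAt
  have hev : ∀ v, gradient ψ (e.symm v) = v := e.apply_symm_apply
  have he : ∀ v, HasGradientAt ψ v (e.symm v) := fun v => by
    simpa only [hev] using hd (e.symm v)
  have := hasGradientAt_of_forall_add_inner_sub_le e.symm.continuous.continuousAt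
    (fun v w => hψ.convexOn.fenchel_add_inner_sub_le (he v) (he w)) (v := e y)
  rwa [e.symm_apply_apply] at this

theorem StrictConvexOn.gradient_fenchel_gradient (hψ : StrictConvexOn ℝ univ ψ)
    (hC : ContDiff ℝ 1 ψ) (hleg : LegendreType ψ) (y : EuclideanSpace ℝ (Fin n)) :
    gradient (fenchel ψ) (gradient ψ y) = y :=
  (hψ.hasGradientAt_fenchel_gradient hC hleg y).gradient

theorem StrictConvexOn.hasGradientAt_fenchel (hψ : StrictConvexOn ℝ univ ψ)
    (hC : ContDiff ℝ 1 ψ) (hleg : LegendreType ψ) (x : EuclideanSpace ℝ (Fin n)) :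
    HasGradientAt (fenchel ψ) (gradient (fenchel ψ) x) x := by
  obtain ⟨y, rfl⟩ := (hψ.isHomeomorph_gradient hC hleg).surjective x
  rw [hψ.gradient_fenchel_gradient hC hleg]
  exact hψ.hasGradientAt_fenchel_gradient hC hleg y

theorem StrictConvexOn.continuous_gradient_fenchel (hψ : StrictConvexOn ℝ univ ψ)
    (hC : ContDiff ℝ 1 ψ) (hleg : LegendreType ψ) :
    Continuous (gradient (fenchel ψ)) := by
  set e := (hψ.isHomeomorph_gradient hC hleg).homeomorph
  have hev : ∀ x, gradient ψ (e.symm x) = x := e.apply_symm_apply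
  have he : gradient (fenchel ψ) = e.symm := funext fun x => by
    simpa only [hev] using hψ.gradient_fenchel_gradient hC hleg (e.symm x)
  rw [he]
  exact e.symm.continuous

end Fenchel

theorem AbsolutelyContinuousOnInterval.of_dist_le_mul {X : Type*} [PseudoMetricSpace X]
    {f : ℝ → X} {F : ℝ → ℝ} {a b : ℝ} {K : ℝ≥0} (hF : AbsolutelyContinuousOnInterval F a b)
    (hfF : ∀ s ∈ uIcc a b, ∀ s' ∈ uIcc a b, dist (f s) (f s') ≤ K * dist (F s) (F s')) :
    AbsolutelyContinuousOnInterval f a b := by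
  rw [absolutelyContinuousOnInterval_iff] at hF ⊢
  intro ε hε
  obtain ⟨δ, hδ, hF⟩ := hF (ε / (K + 1)) (by positivity)
  refine ⟨δ, hδ, fun (m, I) hI hIδ => ?_⟩
  calc ∑ i ∈ Finset.range m, dist (f (I i).1) (f (I i).2)
      ≤ ∑ i ∈ Finset.range m, K * dist (F (I i).1) (F (I i).2) :=
        Finset.sum_le_sum fun i hi => hfF _ (hI.1 i hi).1 _ (hI.1 i hi).2
    _ = K * ∑ i ∈ Finset.range m, dist (F (I i).1) (F (I i).2) := (Finset.mul_sum ..).symm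
    _ ≤ K * (ε / (K + 1)) := by gcongr; exact (hF (m, I) hI hIδ).le
    _ < (K + 1) * (ε / (K + 1)) := by gcongr; linarith
    _ = ε := by field_simp

theorem IntervalIntegrable.dist_integral_le_dist_integral_norm {E : Type*}
    [NormedAddCommGroup E] [NormedSpace ℝ E] {u : ℝ → E} {a b : ℝ}
    (hu : IntervalIntegrable u volume a b)
    {s s' : ℝ} (hs : s ∈ uIcc a b) (hs' : s' ∈ uIcc a b) :
    dist (∫ τ in a..s, u τ) (∫ τ in a..s', u τ) ≤
      dist (∫ τ in a..s, ‖u τ‖) (∫ τ in a..s', ‖u τ‖) := by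
  have hus := hu.mono_set (uIcc_subset_uIcc_left hs)
  have hus' := hu.mono_set (uIcc_subset_uIcc_left hs')
  rw [dist_eq_norm, dist_eq_norm, intervalIntegral.integral_interval_sub_left hus hus',
    intervalIntegral.integral_interval_sub_left hus.norm hus'.norm, Real.norm_eq_abs]
  exact intervalIntegral.norm_integral_le_abs_integral_norm

section ChainRule

variable {E : Type*} [NormedAddCommGroup E] [InnerProductSpace ℝ E] [ProperSpace E]
  {ψ : E → ℝ} {ψ' : E → E} {u : ℝ → E} {a b : ℝ}

theorem absolutelyContinuousOnInterval_comp_primitive (hψ : ∀ z, HasGradientAt ψ (ψ' z) z)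
    (hψ' : Continuous ψ') (hu : IntervalIntegrable u volume a b) (x₀ : E) :
    AbsolutelyContinuousOnInterval (fun s => ψ (x₀ + ∫ τ in a..s, u τ)) a b := by
  set X : ℝ → E := fun s => x₀ + ∫ τ in a..s, u τ
  have hX : ContinuousOn X (uIcc a b) :=
    continuousOn_const.add (intervalIntegral.continuousOn_primitive_interval
      (by rwa [intervalIntegrable_iff'] at hu))
  obtain ⟨R, hR⟩ := (isCompact_uIcc.image_of_continuousOn hX).isBounded.subset_closedBall 0
  have hC : ContDiff ℝ 1 ψ := contDiff_one_iff_fderiv.2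
    ⟨fun z => (hψ z).differentiableAt, by
      rw [show fderiv ℝ ψ = fun z => InnerProductSpace.toDual ℝ E (ψ' z) from
        funext fun z => (hasGradientAt_iff_hasFDerivAt.1 (hψ z)).fderiv]
      exact (InnerProductSpace.toDual ℝ E).continuous.comp hψ'⟩
  obtain ⟨K, hK⟩ := hC.contDiffOn.exists_lipschitzOnWith one_ne_zero (convex_closedBall 0 R)
    (isCompact_closedBall 0 R)
  refine (hu.norm.absolutelyContinuousOnInterval_intervalIntegral left_mem_uIcc).of_dist_le_mul
    (K := K) fun s hs s' hs' => ?_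
  calc dist (ψ (X s)) (ψ (X s')) ≤ K * dist (X s) (X s') :=
        hK.dist_le_mul _ (hR (mem_image_of_mem X hs)) _ (hR (mem_image_of_mem X hs'))
    _ ≤ K * dist (∫ τ in a..s, ‖u τ‖) (∫ τ in a..s', ‖u τ‖) := by
        gcongr
        rw [dist_add_left]
        exact hu.dist_integral_le_dist_integral_norm hs hs'

theorem ae_hasDerivAt_comp_primitive (hψ : ∀ z, HasGradientAt ψ (ψ' z) z)
    (hu : IntervalIntegrable u volume a b) (x₀ : E) :
    ∀ᵐ s, s ∈ uIcc a b → HasDerivAt (fun s => ψ (x₀ + ∫ τ in a..s, u τ))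
      ⟪ψ' (x₀ + ∫ τ in a..s, u τ), u s⟫ s := by
  filter_upwards [hu.ae_hasDerivAt_integral] with s hs hsab
  have := (hasGradientAt_iff_hasFDerivAt.1 (hψ _)).comp_hasDerivAt s
    ((hs hsab a left_mem_uIcc).const_add x₀)
  rw [InnerProductSpace.toDual_apply_apply] at this
  exact this

theorem intervalIntegrable_inner_comp_primitive (hψ : ∀ z, HasGradientAt ψ (ψ' z) z)
    (hψ' : Continuous ψ') (hu : IntervalIntegrable u volume a b) (x₀ : E) :
    IntervalIntegrable (fun s => ⟪ψ' (x₀ + ∫ τ in a..s, u τ), u s⟫) volume a b := by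
  refine (absolutelyContinuousOnInterval_comp_primitive hψ hψ' hu x₀
    ).intervalIntegrable_deriv.congr_ae ?_
  rw [EventuallyEq, ae_restrict_iff' measurableSet_uIoc]
  filter_upwards [ae_hasDerivAt_comp_primitive hψ hu x₀] with s hs hsI
  exact (hs (uIoc_subset_uIcc hsI)).deriv

theorem integral_inner_comp_primitive (hψ : ∀ z, HasGradientAt ψ (ψ' z) z)
    (hψ' : Continuous ψ') (hu : IntervalIntegrable u volume a b) (x₀ : E) :
    ∫ s in a..b, ⟪ψ' (x₀ + ∫ τ in a..s, u τ), u s⟫ = ψ (x₀ + ∫ τ in a..b, u τ) - ψ x₀ := by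
  have hFTC :=
    (absolutelyContinuousOnInterval_comp_primitive hψ hψ' hu x₀).integral_deriv_eq_sub
  rw [intervalIntegral.integral_same, add_zero] at hFTC
  rw [← hFTC]
  refine intervalIntegral.integral_congr_ae ?_
  filter_upwards [ae_hasDerivAt_comp_primitive hψ hu x₀] with s hs hsI
  exact (hs (uIoc_subset_uIcc hsI)).deriv.symm

end ChainRule

theorem hasGradientAt_bregman {n : ℕ} {ψ : EuclideanSpace ℝ (Fin n) → ℝ}
    {g x x' : EuclideanSpace ℝ (Fin n)} (hx : HasGradientAt ψ g x) :
    HasGradientAt (fun x => bregman ψ x x') (g - gradient ψ x') x := by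
  have hfun : (fun x => bregman ψ x x') =
      fun x => ψ x - ψ x' - (innerSL ℝ (gradient ψ x') x - ⟪gradient ψ x', x'⟫) :=
    funext fun x => by simp [bregman, inner_sub_right]
  rw [hasGradientAt_iff_hasFDerivAt] at hx ⊢
  rw [hfun, map_sub]
  exact (hx.sub_const _).sub ((innerSL ℝ _).hasFDerivAt.sub_const _)

/-- The trajectory `ẋ = u` a.e., `x(0) = x₀` is encoded as `x(t) = x₀ + ∫₀ᵗ u`. -/
theorem running_cost_lower_bound_general {n : ℕ} (f φ : EuclideanSpace ℝ (Fin n) → ℝ)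
    (ybar : EuclideanSpace ℝ (Fin n))
    (hfstar : ∀ v : EuclideanSpace ℝ (Fin n),
      BddAbove (Set.range fun z => ⟪v, z⟫ - f z))
    (hφ : ContDiff ℝ 2 φ) (hφconv : StrictConvexOn ℝ Set.univ φ)
    (hleg : LegendreType φ)
    (xbar : EuclideanSpace ℝ (Fin n)) (hxbar : xbar = gradient φ ybar)
    (V : EuclideanSpace ℝ (Fin n) → ℝ)
    (hV : V = fun x => bregman (fenchel φ) x xbar)
    (q : EuclideanSpace ℝ (Fin n) → EuclideanSpace ℝ (Fin n) → ℝ)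
    (hq : q = fun x u => f (gradient (fenchel φ) x) + fenchel f (-u) + ⟪u, ybar⟫)
    (x₀ : EuclideanSpace ℝ (Fin n)) (u x : ℝ → EuclideanSpace ℝ (Fin n))
    (hu : ∀ t : ℝ, IntervalIntegrable u volume 0 t)
    (hx : ∀ t : ℝ, 0 ≤ t → x t = x₀ + ∫ s in (0:ℝ)..t, u s)
    (hqint : ∀ t : ℝ, IntervalIntegrable (fun s => q (x s) (u s)) volume 0 t) :
    ∀ t : ℝ, 0 ≤ t → V x₀ - V (x t) ≤ ∫ s in (0:ℝ)..t, q (x s) (u s) := by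
  intro t ht
  have hC : ContDiff ℝ 1 φ := hφ.of_le (by norm_num)
  set G := gradient (fenchel φ)
  have hGbar : G xbar = ybar := hxbar ▸ hφconv.gradient_fenchel_gradient hC hleg ybar
  have hVgrad : ∀ z, HasGradientAt V (G z - ybar) z := fun z => by
    rw [hV, ← hGbar]
    exact hasGradientAt_bregman (hφconv.hasGradientAt_fenchel hC hleg z)
  have hVcont : Continuous fun z => G z - ybar :=
    (hφconv.continuous_gradient_fenchel hC hleg).sub continuous_const
  have hq_ge : ∀ s, -⟪G (x s) - ybar, u s⟫ ≤ q (x s) (u s) := fun s => by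
    have := inner_sub_le_fenchel (hfstar (-u s)) (G (x s))
    rw [inner_neg_left] at this
    simp only [hq, inner_sub_left]
    linarith [real_inner_comm (u s) (G (x s)), real_inner_comm ybar (u s)]
  have hxX : EqOn (fun s => ⟪G (x s) - ybar, u s⟫)
      (fun s => ⟪G (x₀ + ∫ τ in (0:ℝ)..s, u τ) - ybar, u s⟫) (uIcc 0 t) := fun s hs => by
    rw [uIcc_of_le ht] at hs
    simp only [hx s hs.1]
  have hint : IntervalIntegrable (fun s => ⟪G (x s) - ybar, u s⟫) volume 0 t :=
    (intervalIntegrable_congr (hxX.mono uIoc_subset_uIcc)).2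
      (intervalIntegrable_inner_comp_primitive hVgrad hVcont (hu t) x₀)
  calc V x₀ - V (x t) = ∫ s in (0:ℝ)..t, -⟪G (x s) - ybar, u s⟫ := by
        rw [intervalIntegral.integral_neg, intervalIntegral.integral_congr hxX,
          integral_inner_comp_primitive hVgrad hVcont (hu t) x₀, ← hx t ht]
        ring
    _ ≤ ∫ s in (0:ℝ)..t, q (x s) (u s) :=
        intervalIntegral.integral_mono_on ht hint.neg (hqint t) fun s _ => hq_ge s

/-- along any trajectory of `ẋ = u` with `x(0) = x₀` (encoded as
`x(t) = x₀ + ∫₀ᵗ u`, the absolutely continuous solution with `ẋ = u` a.e.),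
`∫₀ᵗ q(x(s), u(s)) ds ≥ V(x₀) − V(x(t))`. -/
theorem running_cost_lower_bound {n : ℕ} (f φ : EuclideanSpace ℝ (Fin n) → ℝ)
    (hf : ContDiff ℝ 1 f) (hfconv : StrictConvexOn ℝ Set.univ f)
    (ybar : EuclideanSpace ℝ (Fin n)) (hmin : ∀ z, f ybar ≤ f z)
    (hfstar : ∀ v : EuclideanSpace ℝ (Fin n),
      BddAbove (Set.range fun z => ⟪v, z⟫ - f z))
    (hφ : ContDiff ℝ 2 φ) (hφconv : StrictConvexOn ℝ Set.univ φ)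
    (hleg : LegendreType φ)
    (xbar : EuclideanSpace ℝ (Fin n)) (hxbar : xbar = gradient φ ybar)
    (V : EuclideanSpace ℝ (Fin n) → ℝ)
    (hV : V = fun x => bregman (fenchel φ) x xbar)
    (q : EuclideanSpace ℝ (Fin n) → EuclideanSpace ℝ (Fin n) → ℝ)
    (hq : q = fun x u => f (gradient (fenchel φ) x) + fenchel f (-u) + ⟪u, ybar⟫)
    (x₀ : EuclideanSpace ℝ (Fin n)) (u x : ℝ → EuclideanSpace ℝ (Fin n))
    (hu : ∀ t : ℝ, IntervalIntegrable u volume 0 t)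
    (hx : ∀ t : ℝ, 0 ≤ t → x t = x₀ + ∫ s in (0:ℝ)..t, u s)
    (hqint : ∀ t : ℝ, IntervalIntegrable (fun s => q (x s) (u s)) volume 0 t) :
    ∀ t : ℝ, 0 ≤ t → V x₀ - V (x t) ≤ ∫ s in (0:ℝ)..t, q (x s) (u s) :=
  running_cost_lower_bound_general f φ ybar hfstar hφ hφconv hleg xbar hxbar V hV q hq x₀ u x hu hx
    hqint
end

section
/- Let f : ℝⁿ → ℝ be C¹ and strictly convex with unique global minimizer ȳ, φ : ℝⁿ → ℝ C², strictly convex, Legendre type, with conjugate φ*; set x̄ := ∇φ(ȳ), V(x) := D_{φ*}(x, x̄), q(x, u) := f(∇φ*(x)) + f*(−u) + ⟨u, ȳ⟩. Let x : [0, ∞) → ℝⁿ solve the mirror descent closed-loop system ẋ(t) = −∇f(∇φ*(x(t))), x(0) = x₀, and set u(t) := −∇f(∇φ*(x(t))). Then for every t ≥ 0, ∫₀ᵗ q(x(s), u(s)) ds = V(x₀) − V(x(t)). -/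
/-!
Since `φ` is strictly convex and of Legendre type, `∇φ` is a homeomorphism of `ℝⁿ` and `∇φ*` is
its inverse. Hence `V = D_{φ*}(·, x̄)` has gradient `∇φ*(x) - ȳ`, and along the flow
`d/dt V(x(t)) = -⟪∇φ*(x) - ȳ, ∇f(∇φ*(x))⟫`. By the equality case of Fenchel–Young,
`f(y) + f*(∇f(y)) = ⟪∇f(y), y⟫`, this is exactly `-q(x, u)`; integrate.
-/

open scoped RealInnerProductSpace
open Filter MeasureTheory

open Set Function InnerProductSpace Topology

theorem isProperMap_of_tendsto_norm {X F : Type*} [TopologicalSpace X] [NormedAddCommGroup F]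
    [ProperSpace F] {g : X → F} (hgc : Continuous g)
    (hg : Tendsto (‖g ·‖) (cocompact X) atTop) : IsProperMap g :=
  isProperMap_iff_tendsto_cocompact.mpr
    ⟨hgc, Metric.cobounded_eq_cocompact (α := F) ▸ tendsto_norm_atTop_iff_cobounded.mp hg⟩

section GradientField

variable {E : Type*} [NormedAddCommGroup E] [InnerProductSpace ℝ E] [CompleteSpace E]

theorem ConvexOn.add_inner_sub_le_of_hasGradientAt_s5 {h : E → ℝ} {G p : E}
    (hc : ConvexOn ℝ univ h) (hg : HasGradientAt h G p) (y : E) :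
    h p + ⟪G, y - p⟫ ≤ h y := by
  have hline : HasDerivAt (h ∘ AffineMap.lineMap (k := ℝ) p y) ⟪G, y - p⟫ 0 := by
    have hg' : HasFDerivAt h (toDual ℝ E G) (AffineMap.lineMap p y (0 : ℝ)) := by
      simpa using hg.hasFDerivAt
    exact hg'.comp_hasDerivAt 0 AffineMap.hasDerivAt_lineMap
  have hslope := (hc.comp_affineMap (AffineMap.lineMap p y)).le_slope_of_hasDerivAt
    (mem_univ 0) (mem_univ 1) zero_lt_one hline
  simp only [slope_def_field, comp_apply, AffineMap.lineMap_apply_one,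
    AffineMap.lineMap_apply_zero, sub_zero, div_one] at hslope
  linarith

theorem StrictConvexOn.add_inner_sub_lt_of_hasGradientAt {h : E → ℝ} {G p y : E}
    (hc : StrictConvexOn ℝ univ h) (hg : HasGradientAt h G p) (hy : p ≠ y) :
    h p + ⟪G, y - p⟫ < h y := by
  have hmid := hc.2 (mem_univ p) (mem_univ y) hy one_half_pos one_half_pos (add_halves 1)
  have htangent := hc.convexOn.add_inner_sub_le_of_hasGradientAt_s5 hg
    ((1 / 2 : ℝ) • p + (1 / 2 : ℝ) • y)
  have hinner : ⟪G, (1 / 2 : ℝ) • p + (1 / 2 : ℝ) • y - p⟫ = (1 / 2) * ⟪G, y - p⟫ := by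
    rw [← real_inner_smul_right]
    congr 1
    module
  simp only [smul_eq_mul] at hmid
  linarith

theorem StrictConvexOn.injective_of_hasGradientAt {h : E → ℝ} {g : E → E}
    (hc : StrictConvexOn ℝ univ h) (hg : ∀ p, HasGradientAt h (g p) p) : Injective g := by
  intro p y hpy
  by_contra hne
  have h₁ := hc.add_inner_sub_lt_of_hasGradientAt (hg p) hne
  have h₂ := hc.add_inner_sub_lt_of_hasGradientAt (hg y) (Ne.symm hne)
  rw [hpy, ← neg_sub, inner_neg_right] at h₁
  linarith

theorem ConvexOn.mul_norm_le_of_hasGradientAt_eq_neg_smul {h : E → ℝ} {g : E → E}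
    (hc : ConvexOn ℝ univ h) (hg : ∀ p, HasGradientAt h (g p) p) {ε : ℝ} {z : E}
    (hz : g z = -(ε • z)) : ε * ‖z‖ ≤ ‖g 0‖ := by
  have h₁ := hc.add_inner_sub_le_of_hasGradientAt_s5 (hg 0) z
  have h₂ := hc.add_inner_sub_le_of_hasGradientAt_s5 (hg z) 0
  rw [sub_zero] at h₁
  rw [hz, zero_sub, inner_neg_neg, real_inner_smul_left, real_inner_self_eq_norm_sq] at h₂
  have hCS : -⟪g 0, z⟫ ≤ ‖g 0‖ * ‖z‖ := (neg_le_abs _).trans (abs_real_inner_le_norm _ _)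
  rcases (norm_nonneg z).eq_or_lt with hz0 | hzpos
  · rw [← hz0, mul_zero]
    positivity
  · exact le_of_mul_le_mul_right (by nlinarith) hzpos

theorem ConvexOn.exists_hasGradientAt_eq_neg_smul [ProperSpace E] {h : E → ℝ} {g : E → E}
    (hc : ConvexOn ℝ univ h) (hg : ∀ p, HasGradientAt h (g p) p) {ε : ℝ} (hε : 0 < ε) :
    ∃ z, g z = -(ε • z) := by
  set H : E → ℝ := fun z => h z + ε / 2 * ‖z‖ ^ 2
  have hH : ∀ z, HasGradientAt H (g z + ε • z) z := by
    intro z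
    refine ((hg z).hasFDerivAt.add
      ((hasStrictFDerivAt_norm_sq z).hasFDerivAt.const_mul (ε / 2))).congr_fderiv ?_
    ext w
    simp only [add_apply, toDual_apply_apply, smul_apply,
      coe_innerSL_apply, nsmul_eq_mul, Nat.cast_ofNat, smul_eq_mul, map_add, map_smul,
      add_right_inj]
    ring
  have hHcont : Continuous H := continuous_iff_continuousAt.2 fun z => (hH z).continuousAt
  have hcoercive : Tendsto H (cocompact E) atTop := by
    have hpoly : Tendsto (fun r : ℝ => r * (ε / 2 * r - ‖g 0‖) + h 0) atTop atTop :=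
      tendsto_atTop_add_const_right _ _ (tendsto_id.atTop_mul_atTop₀
        (tendsto_atTop_add_const_right _ _ (tendsto_id.const_mul_atTop (by positivity))))
    refine tendsto_atTop_mono (fun z => ?_) (hpoly.comp tendsto_norm_cocompact_atTop)
    have htangent := hc.add_inner_sub_le_of_hasGradientAt_s5 (hg 0) z
    have hCS : -⟪g 0, z⟫ ≤ ‖g 0‖ * ‖z‖ := (neg_le_abs _).trans (abs_real_inner_le_norm _ _)
    rw [sub_zero] at htangent
    simp only [Function.comp_apply, H]
    nlinarith
  obtain ⟨z, hz⟩ := hHcont.exists_forall_le hcoercive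
  refine ⟨z, eq_neg_of_add_eq_zero_left ?_⟩
  have hmin : IsLocalMin H z := Eventually.of_forall hz
  exact (toDual ℝ E).map_eq_zero_iff.mp (hmin.hasFDerivAt_eq_zero (hH z))

theorem ConvexOn.surjective_of_tendsto_norm_gradient [ProperSpace E] {φ : E → ℝ} {g : E → E}
    (hc : ConvexOn ℝ univ φ) (hg : ∀ p, HasGradientAt φ (g p) p) (hgc : Continuous g)
    (hleg : Tendsto (‖g ·‖) (cocompact E) atTop) : Surjective g := by
  intro v
  have hproper := isProperMap_of_tendsto_norm hgc hleg
  suffices v ∈ closure (range g) by rwa [hproper.isClosedMap.isClosed_range.closure_eq] at this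
  -- Critical points `z` of `φ - ⟪v, ·⟫ + ε ‖·‖² / 2` satisfy `‖g z - v‖ = ε ‖z‖ ≤ ‖g 0 - v‖`;
  -- by properness of `g` they stay bounded, so `g z → v` as `ε → 0`.
  set h : E → ℝ := fun z => φ z - ⟪v, z⟫
  have hhc : ConvexOn ℝ univ h := hc.sub ((innerₛₗ ℝ v).concaveOn convex_univ)
  have hhg : ∀ p, HasGradientAt h (g p - v) p := fun p => by
    rw [hasGradientAt_iff_hasFDerivAt, map_sub]
    exact (hg p).hasFDerivAt.sub (toDual ℝ E v).hasFDerivAt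
  obtain ⟨B, hBpos, hB⟩ := ((hproper.isCompact_preimage
    (isCompact_closedBall v ‖g 0 - v‖)).isBounded).exists_pos_norm_le
  refine Metric.mem_closure_iff.2 fun δ hδ => ?_
  obtain ⟨z, hz⟩ := hhc.exists_hasGradientAt_eq_neg_smul hhg (div_pos hδ (mul_pos two_pos hBpos))
  have hbound := hhc.mul_norm_le_of_hasGradientAt_eq_neg_smul hhg hz
  have hdist : dist v (g z) = δ / (2 * B) * ‖z‖ := by
    rw [dist_comm, dist_eq_norm, hz, norm_neg, norm_smul, Real.norm_of_nonneg (by positivity)]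
  have hzB : ‖z‖ ≤ B := hB z (by rwa [mem_preimage, Metric.mem_closedBall, dist_comm, hdist])
  refine ⟨g z, mem_range_self z, ?_⟩
  calc dist v (g z) = δ / (2 * B) * ‖z‖ := hdist
    _ ≤ δ / (2 * B) * B := by gcongr
    _ < δ := by field_simp; linarith

theorem StrictConvexOn.exists_homeomorph_eq_gradient [ProperSpace E] {φ : E → ℝ} {g : E → E}
    (hc : StrictConvexOn ℝ univ φ) (hg : ∀ p, HasGradientAt φ (g p) p) (hgc : Continuous g)
    (hleg : Tendsto (‖g ·‖) (cocompact E) atTop) : ∃ e : E ≃ₜ E, ⇑e = g :=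
  ⟨(Equiv.ofBijective g ⟨hc.injective_of_hasGradientAt hg,
      hc.convexOn.surjective_of_tendsto_norm_gradient hg hgc hleg⟩).toHomeomorphOfContinuousClosed
    hgc (isProperMap_of_tendsto_norm hgc hleg).isClosedMap, rfl⟩

theorem isGreatest_inner_sub_of_hasGradientAt {h : E → ℝ} {G p : E}
    (hc : ConvexOn ℝ univ h) (hg : HasGradientAt h G p) :
    IsGreatest (range fun z => ⟪G, z⟫ - h z) (⟪G, p⟫ - h p) := by
  refine ⟨mem_range_self p, ?_⟩
  rintro _ ⟨z, rfl⟩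
  have := hc.add_inner_sub_le_of_hasGradientAt_s5 hg z
  rw [inner_sub_right] at this
  dsimp only
  linarith

theorem hasGradientAt_of_abs_le_mul {F : E → ℝ} {G v : E} {r : E → ℝ}
    (hr : Tendsto r (𝓝 v) (𝓝 0)) (hF : ∀ w, |F w - F v - ⟪G, w - v⟫| ≤ r w * ‖w - v‖) :
    HasGradientAt F G v := by
  rw [hasGradientAt_iff_isLittleO]
  refine Asymptotics.IsBigO.trans_isLittleO (g := fun w => r w * ‖w - v‖)
    (Asymptotics.IsBigO.of_bound 1 (Eventually.of_forall fun w => ?_)) ?_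
  · simpa using (hF w).trans (le_abs_self _)
  · refine Asymptotics.isLittleO_norm_right.1 ?_
    simpa using ((Asymptotics.isLittleO_one_iff ℝ).2 hr).mul_isBigO
      (Asymptotics.isBigO_refl (fun w => ‖w - v‖) (𝓝 v))

theorem ContDiff.continuous_gradient {f : E → ℝ} {k : WithTop ℕ∞} (hf : ContDiff ℝ k f)
    (hk : k ≠ 0) : Continuous (gradient f) :=
  (toDual ℝ E).symm.continuous.comp (hf.continuous_fderiv hk)

theorem integral_inner_gradient_comp_eq_sub {V : E → ℝ} {W X : E → E}
    (hV : ∀ p, HasGradientAt V (W p) p) (hW : Continuous W) (hX : Continuous X) {x : ℝ → E}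
    {a b : ℝ} (hx : ∀ s ∈ uIcc a b, HasDerivAt x (X (x s)) s) :
    ∫ s in a..b, ⟪W (x s), X (x s)⟫ = V (x b) - V (x a) := by
  have hxc : ContinuousOn x (uIcc a b) := fun s hs => (hx s hs).continuousAt.continuousWithinAt
  exact intervalIntegral.integral_eq_sub_of_hasDerivAt
    (fun s hs => (hV (x s)).hasFDerivAt.comp_hasDerivAt s (hx s hs))
    ((hW.inner hX).comp_continuousOn hxc).intervalIntegrable

end GradientField

section Conjugate

variable {n : ℕ}

theorem fenchel_eq_of_hasGradientAt {h : EuclideanSpace ℝ (Fin n) → ℝ}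
    {G p : EuclideanSpace ℝ (Fin n)} (hc : ConvexOn ℝ univ h) (hg : HasGradientAt h G p) :
    fenchel h G = ⟪G, p⟫ - h p :=
  (isGreatest_inner_sub_of_hasGradientAt hc hg).csSup_eq

theorem inner_sub_le_fenchel_of_hasGradientAt {h : EuclideanSpace ℝ (Fin n) → ℝ}
    {G p : EuclideanSpace ℝ (Fin n)} (hc : ConvexOn ℝ univ h) (hg : HasGradientAt h G p)
    (z : EuclideanSpace ℝ (Fin n)) : ⟪G, z⟫ - h z ≤ fenchel h G :=
  le_ciSup (isGreatest_inner_sub_of_hasGradientAt hc hg).bddAbove z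

theorem hasGradientAt_fenchel {φ : EuclideanSpace ℝ (Fin n) → ℝ}
    {Z : EuclideanSpace ℝ (Fin n) → EuclideanSpace ℝ (Fin n)} (hc : ConvexOn ℝ univ φ)
    (hZ : ∀ w, HasGradientAt φ w (Z w)) (hZc : Continuous Z) (v : EuclideanSpace ℝ (Fin n)) :
    HasGradientAt (fenchel φ) (Z v) v := by
  -- Fenchel–Young at `v` and at `w` gives
  -- `0 ≤ φ*(w) - φ*(v) - ⟪Z v, w - v⟫ ≤ ⟪w - v, Z w - Z v⟫`, and `Z` is continuous.
  refine hasGradientAt_of_abs_le_mul (r := fun w => ‖Z w - Z v‖) ?_ fun w => ?_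
  · simpa using (hZc.sub (continuous_const (y := Z v))).norm.tendsto v
  have hw := inner_sub_le_fenchel_of_hasGradientAt hc (hZ w) (Z v)
  have hv := inner_sub_le_fenchel_of_hasGradientAt hc (hZ v) (Z w)
  rw [fenchel_eq_of_hasGradientAt hc (hZ w)] at hw ⊢
  rw [fenchel_eq_of_hasGradientAt hc (hZ v)] at hv ⊢
  have hCS := real_inner_le_norm (w - v) (Z w - Z v)
  have hcomm : ⟪Z v, w - v⟫ = ⟪w, Z v⟫ - ⟪v, Z v⟫ := by
    rw [inner_sub_right, real_inner_comm, real_inner_comm v]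
  have hexpand : ⟪w - v, Z w - Z v⟫ = ⟪w, Z w⟫ - ⟪w, Z v⟫ - ⟪v, Z w⟫ + ⟪v, Z v⟫ := by
    rw [inner_sub_left, inner_sub_right, inner_sub_right]
    ring
  have hprod : 0 ≤ ‖Z w - Z v‖ * ‖w - v‖ := by positivity
  rw [abs_le]
  constructor <;> nlinarith

theorem hasGradientAt_bregman_left {ψ : EuclideanSpace ℝ (Fin n) → ℝ}
    {G p : EuclideanSpace ℝ (Fin n)} (hψ : HasGradientAt ψ G p) (y' : EuclideanSpace ℝ (Fin n)) :
    HasGradientAt (fun y => bregman ψ y y') (G - gradient ψ y') p := by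
  rw [hasGradientAt_iff_hasFDerivAt, map_sub]
  have := ((hψ.hasFDerivAt.sub_const (ψ y')).sub
    (((toDual ℝ _ (gradient ψ y')).hasFDerivAt).sub_const ⟪gradient ψ y', y'⟫))
  refine this.congr_of_eventuallyEq (Eventually.of_forall fun y => ?_)
  simp only [bregman, inner_sub_right, Pi.sub_apply, toDual_apply_apply]

theorem LegendreType.exists_homeomorph_gradient {φ : EuclideanSpace ℝ (Fin n) → ℝ}
    (hleg : LegendreType φ) (hφ : ContDiff ℝ 1 φ) (hc : StrictConvexOn ℝ univ φ) :
    ∃ e : EuclideanSpace ℝ (Fin n) ≃ₜ EuclideanSpace ℝ (Fin n),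
      ⇑e = gradient φ ∧ ∀ v, HasGradientAt (fenchel φ) (e.symm v) v := by
  have hgrad : ∀ p, HasGradientAt φ (gradient φ p) p := fun p =>
    (hφ.differentiable one_ne_zero p).hasGradientAt
  obtain ⟨e, he⟩ := hc.exists_homeomorph_eq_gradient hgrad (hφ.continuous_gradient one_ne_zero) hleg
  refine ⟨e, he, hasGradientAt_fenchel hc.convexOn (fun w => ?_) e.symm.continuous⟩
  simpa [← he] using hgrad (e.symm w)

end Conjugate

theorem mirror_descent_cost_identity_general {n : ℕ} (f φ : EuclideanSpace ℝ (Fin n) → ℝ)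
    (hf : ContDiff ℝ 1 f) (hfconv : StrictConvexOn ℝ Set.univ f)
    (ybar : EuclideanSpace ℝ (Fin n))
    (hφ : ContDiff ℝ 2 φ) (hφconv : StrictConvexOn ℝ Set.univ φ)
    (hleg : LegendreType φ)
    (xbar : EuclideanSpace ℝ (Fin n)) (hxbar : xbar = gradient φ ybar)
    (V : EuclideanSpace ℝ (Fin n) → ℝ)
    (hV : V = fun x => bregman (fenchel φ) x xbar)
    (q : EuclideanSpace ℝ (Fin n) → EuclideanSpace ℝ (Fin n) → ℝ)
    (hq : q = fun x u => f (gradient (fenchel φ) x) + fenchel f (-u) + ⟪u, ybar⟫)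
    (x₀ : EuclideanSpace ℝ (Fin n)) (x : ℝ → EuclideanSpace ℝ (Fin n))
    (hx0 : x 0 = x₀)
    (hode : ∀ t : ℝ, 0 ≤ t →
      HasDerivAt x (-gradient f (gradient (fenchel φ) (x t))) t) :
    ∀ t : ℝ, 0 ≤ t →
      ∫ s in (0:ℝ)..t, q (x s) (-gradient f (gradient (fenchel φ) (x s)))
        = V x₀ - V (x t) := by
  intro t ht
  obtain ⟨e, he, hconj⟩ := hleg.exists_homeomorph_gradient (hφ.of_le one_le_two) hφconv
  have hybar : e.symm xbar = ybar := by rw [hxbar, ← he, e.symm_apply_apply]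
  have hVgrad : ∀ p, HasGradientAt V (e.symm p - ybar) p := fun p => by
    have := hasGradientAt_bregman_left (hconj p) xbar
    rwa [(hconj xbar).gradient, hybar, ← hV] at this
  rw [gradient_eq hconj] at hode hq ⊢
  have hcost : ∀ p, q p (-gradient f (e.symm p)) = -⟪e.symm p - ybar, -gradient f (e.symm p)⟫ := by
    intro p
    simp only [hq, neg_neg, fenchel_eq_of_hasGradientAt hfconv.convexOn
      (hf.differentiable one_ne_zero _).hasGradientAt, inner_neg_right,
      inner_sub_left, real_inner_comm]
    ring
  have hflow : ∫ s in (0:ℝ)..t, ⟪e.symm (x s) - ybar, -gradient f (e.symm (x s))⟫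
      = V (x t) - V x₀ := by
    rw [← hx0]
    exact integral_inner_gradient_comp_eq_sub hVgrad (e.symm.continuous.sub continuous_const)
      ((hf.continuous_gradient one_ne_zero).comp e.symm.continuous).neg
      (fun s hs => hode s (by rw [uIcc_of_le ht] at hs; exact hs.1))
  simp only [hcost, intervalIntegral.integral_neg, hflow, neg_sub]

/-- along the mirror-descent closed loop `ẋ = −∇f(∇φ*(x))`, with
`u(t) = −∇f(∇φ*(x(t)))`, the running cost satisfies
`∫₀ᵗ q(x(s), u(s)) ds = V(x₀) − V(x(t))` for all `t ≥ 0`. -/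
theorem mirror_descent_cost_identity {n : ℕ} (f φ : EuclideanSpace ℝ (Fin n) → ℝ)
    (hf : ContDiff ℝ 1 f) (hfconv : StrictConvexOn ℝ Set.univ f)
    (ybar : EuclideanSpace ℝ (Fin n)) (hmin : ∀ z, f ybar ≤ f z)
    (hφ : ContDiff ℝ 2 φ) (hφconv : StrictConvexOn ℝ Set.univ φ)
    (hleg : LegendreType φ)
    (xbar : EuclideanSpace ℝ (Fin n)) (hxbar : xbar = gradient φ ybar)
    (V : EuclideanSpace ℝ (Fin n) → ℝ)
    (hV : V = fun x => bregman (fenchel φ) x xbar)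
    (q : EuclideanSpace ℝ (Fin n) → EuclideanSpace ℝ (Fin n) → ℝ)
    (hq : q = fun x u => f (gradient (fenchel φ) x) + fenchel f (-u) + ⟪u, ybar⟫)
    (x₀ : EuclideanSpace ℝ (Fin n)) (x : ℝ → EuclideanSpace ℝ (Fin n))
    (hx0 : x 0 = x₀)
    (hode : ∀ t : ℝ, 0 ≤ t →
      HasDerivAt x (-gradient f (gradient (fenchel φ) (x t))) t) :
    ∀ t : ℝ, 0 ≤ t →
      ∫ s in (0:ℝ)..t, q (x s) (-gradient f (gradient (fenchel φ) (x s)))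
        = V x₀ - V (x t) :=
  mirror_descent_cost_identity_general f φ hf hfconv ybar hφ hφconv hleg xbar hxbar V hV q hq x₀ x
    hx0 hode
end

section
/- Let f : ℝⁿ → ℝ be C¹ and strictly convex with unique global minimizer ȳ, φ : ℝⁿ → ℝ C², strictly convex, Legendre type, with conjugate φ*; set x̄ := ∇φ(ȳ) and V(x) := D_{φ*}(x, x̄). Let x : [0, ∞) → ℝⁿ solve ẋ(t) = −∇f(∇φ*(x(t))) and set y(t) := ∇φ*(x(t)). Then for all t ≥ 0, (d/dt) V(x(t)) ≤ f(ȳ) − f(y(t)) ≤ 0, and the first inequality is strict (i.e., (d/dt)V(x(t)) < 0) whenever x(t) ≠ x̄. -/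
open scoped RealInnerProductSpace
open Filter MeasureTheory

/-!
The gradient of `φ` is a homeomorphism of `ℝⁿ`: it is injective by strict convexity, and onto
because each regularised equation `∇φ(z) + ε z = v` is solved by a minimiser of
`φ + ε ‖·‖² / 2 - ⟪v, ·⟫`, these solutions stay in a compact set as `∇φ` is proper, and the range
of a proper map is closed. The supremum defining `φ*(w)` is then attained at
`(∇φ)⁻¹(w)`, which makes `φ*` differentiable with `∇φ* = (∇φ)⁻¹`. Along the flow,
`d/dt V(x(t)) = ⟪∇f(y(t)), ȳ - y(t)⟫`, and the gradient inequality for `f` bounds this by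
`f(ȳ) - f(y(t)) ≤ 0`, strictly when `y(t) ≠ ȳ`, i.e. when `x(t) ≠ x̄`.
-/

open Set Function InnerProductSpace
open scoped Gradient

section Normed

variable {E : Type*} [NormedAddCommGroup E] [NormedSpace ℝ E] {s : Set E} {f : E → ℝ}
  {f' : E →L[ℝ] ℝ} {a b : E}

theorem ConvexOn.map_sub_le_of_hasFDerivAt (hf : ConvexOn ℝ s f) (ha : a ∈ s) (hb : b ∈ s)
    (hd : HasFDerivAt f f' a) : f' (b - a) ≤ f b - f a := by
  set ℓ : ℝ →ᵃ[ℝ] E := AffineMap.lineMap a b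
  have hline : ConvexOn ℝ (ℓ ⁻¹' s) (f ∘ ℓ) := hf.comp_affineMap ℓ
  have hderiv : HasDerivAt (f ∘ ℓ) (f' (b - a)) 0 := by
    simpa using hd.comp_hasDerivAt_of_eq (0 : ℝ)
      (AffineMap.hasDerivAt_lineMap (𝕜 := ℝ) (a := a) (b := b)) (by simp)
  simpa [slope_def_field, ℓ] using
    hline.le_slope_of_hasDerivAt (by simpa [ℓ]) (by simpa [ℓ]) zero_lt_one hderiv

theorem StrictConvexOn.map_sub_lt_of_hasFDerivAt (hf : StrictConvexOn ℝ s f) (ha : a ∈ s)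
    (hb : b ∈ s) (hab : a ≠ b) (hd : HasFDerivAt f f' a) : f' (b - a) < f b - f a := by
  have hmid : f (midpoint ℝ a b) < 2⁻¹ * f a + 2⁻¹ * f b := by
    simpa [midpoint_eq_smul_add, smul_add] using
      hf.2 ha hb hab (by norm_num : (0 : ℝ) < 2⁻¹) (by norm_num : (0 : ℝ) < 2⁻¹) (by norm_num)
  have hle := hf.convexOn.map_sub_le_of_hasFDerivAt ha (hf.1.segment_subset ha hb
    (midpoint_mem_segment a b)) hd
  rw [midpoint_sub_left, map_smul, smul_eq_mul, invOf_eq_inv] at hle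
  linarith

end Normed

section InnerProduct

variable {E : Type*} [NormedAddCommGroup E] [InnerProductSpace ℝ E] [CompleteSpace E]
  {s : Set E} {f : E → ℝ} {a b : E}

theorem ConvexOn.inner_gradient_le (hf : ConvexOn ℝ s f) (ha : a ∈ s) (hb : b ∈ s)
    (hd : DifferentiableAt ℝ f a) : ⟪∇ f a, b - a⟫ ≤ f b - f a := by
  rw [inner_gradient_left]
  exact hf.map_sub_le_of_hasFDerivAt ha hb hd.hasFDerivAt

theorem StrictConvexOn.inner_gradient_lt (hf : StrictConvexOn ℝ s f) (ha : a ∈ s) (hb : b ∈ s)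
    (hab : a ≠ b) (hd : DifferentiableAt ℝ f a) : ⟪∇ f a, b - a⟫ < f b - f a := by
  rw [inner_gradient_left]
  exact hf.map_sub_lt_of_hasFDerivAt ha hb hab hd.hasFDerivAt

theorem ConvexOn.inner_gradient_sub_gradient_nonneg (hf : ConvexOn ℝ s f) (ha : a ∈ s)
    (hb : b ∈ s) (hda : DifferentiableAt ℝ f a) (hdb : DifferentiableAt ℝ f b) :
    0 ≤ ⟪∇ f a - ∇ f b, a - b⟫ := by
  have hab := hf.inner_gradient_le ha hb hda
  have hba := hf.inner_gradient_le hb ha hdb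
  rw [← neg_sub a b, inner_neg_right] at hab
  rw [inner_sub_left]
  linarith

theorem StrictConvexOn.inner_gradient_sub_gradient_pos (hf : StrictConvexOn ℝ s f) (ha : a ∈ s)
    (hb : b ∈ s) (hab : a ≠ b) (hda : DifferentiableAt ℝ f a) (hdb : DifferentiableAt ℝ f b) :
    0 < ⟪∇ f a - ∇ f b, a - b⟫ := by
  have hab' := hf.inner_gradient_lt ha hb hab hda
  have hba := hf.inner_gradient_lt hb ha hab.symm hdb
  rw [← neg_sub a b, inner_neg_right] at hab'
  rw [inner_sub_left]
  linarith

theorem StrictConvexOn.injOn_gradient (hf : StrictConvexOn ℝ s f)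
    (hd : ∀ x ∈ s, DifferentiableAt ℝ f x) : InjOn (∇ f) s := by
  intro a ha b hb hab
  by_contra hne
  simpa [hab] using hf.inner_gradient_sub_gradient_pos ha hb hne (hd a ha) (hd b hb)

theorem ConvexOn.mul_norm_le_of_gradient_add_smul_eq (hf : ConvexOn ℝ univ f)
    (hd : Differentiable ℝ f) {ε : ℝ} {z v : E} (hz : ∇ f z + ε • z = v) :
    ε * ‖z‖ ≤ ‖v - ∇ f 0‖ := by
  have hmono := hf.inner_gradient_sub_gradient_nonneg (mem_univ z) (mem_univ 0) (hd z) (hd 0)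
  have hcs := real_inner_le_norm (v - ∇ f 0) z
  have hgz : ∇ f z - ∇ f 0 = v - ∇ f 0 - ε • z := by rw [← hz]; abel
  rw [sub_zero, hgz, inner_sub_left, real_inner_smul_left, real_inner_self_eq_norm_sq] at hmono
  rcases (norm_nonneg z).eq_or_lt with hz0 | hz0
  · rw [← hz0, mul_zero]
    exact norm_nonneg _
  · exact le_of_mul_le_mul_right (by nlinarith) hz0

theorem HasGradientAt.comp_hasDerivAt {x : ℝ → E} {f' x' : E} {t : ℝ}
    (hf : HasGradientAt f f' (x t)) (hx : HasDerivAt x x' t) :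
    HasDerivAt (fun s => f (x s)) ⟪f', x'⟫ t := by
  have h := (hasGradientAt_iff_hasFDerivAt.mp hf).comp_hasDerivAt t hx
  rw [toDual_apply_apply] at h
  exact h

end InnerProduct

section Surjectivity

variable {E : Type*} [NormedAddCommGroup E] [InnerProductSpace ℝ E] [ProperSpace E] {f : E → ℝ}

theorem ConvexOn.exists_gradient_add_smul_eq (hf : ConvexOn ℝ univ f) (hd : Differentiable ℝ f)
    {ε : ℝ} (hε : 0 < ε) (v : E) : ∃ z, ∇ f z + ε • z = v := by
  set F : E → ℝ := fun z => f z + ε / 2 * ‖z‖ ^ 2 - ⟪v, z⟫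
  set C := ‖v - ∇ f 0‖
  have hF_ge : ∀ z, ‖z‖ + (f 0 - (C + 1) ^ 2 / (2 * ε)) ≤ F z := by
    intro z
    have h₁ := hf.inner_gradient_le (mem_univ 0) (mem_univ z) (hd 0)
    have h₂ : ⟪v - ∇ f 0, z⟫ ≤ C * ‖z‖ := real_inner_le_norm _ _
    have hsq : 0 ≤ ε / 2 * (‖z‖ - (C + 1) / ε) ^ 2 := by positivity
    rw [sub_zero] at h₁
    rw [inner_sub_left] at h₂
    have hexp : ε / 2 * (‖z‖ - (C + 1) / ε) ^ 2
        = ε / 2 * ‖z‖ ^ 2 - (C + 1) * ‖z‖ + (C + 1) ^ 2 / (2 * ε) := by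
      field_simp
      ring
    simp only [F]
    linarith
  have hF_cocompact : Tendsto F (cocompact E) atTop :=
    tendsto_atTop_mono hF_ge (tendsto_atTop_add_const_right _ _ tendsto_norm_cocompact_atTop)
  have hF_cont : Continuous F := by
    have := hd.continuous
    fun_prop
  obtain ⟨z, hz⟩ := hF_cont.exists_forall_le hF_cocompact
  have hF_deriv : HasFDerivAt F (toDual ℝ E (∇ f z + ε • z - v)) z := by
    refine (((hd z).hasFDerivAt.add ((hasStrictFDerivAt_norm_sq z).hasFDerivAt.const_mul
      (ε / 2))).sub (innerSL ℝ v).hasFDerivAt).congr_fderiv ?_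
    ext w
    simp only [sub_apply, add_apply, smul_apply, coe_innerSL_apply, map_sub, map_add, map_smul,
      toDual_gradient, toDual_apply_apply, nsmul_eq_mul, Nat.cast_ofNat, smul_eq_mul]
    ring
  refine ⟨z, sub_eq_zero.mp ?_⟩
  have hF_min : IsLocalMin F z := Filter.Eventually.of_forall hz
  exact (toDual ℝ E).map_eq_zero_iff.mp (hF_min.hasFDerivAt_eq_zero hF_deriv)

theorem ConvexOn.surjective_gradient_s6 (hf : ConvexOn ℝ univ f) (hd : Differentiable ℝ f)
    (hp : IsProperMap (∇ f)) : Surjective (∇ f) := by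
  intro v
  obtain ⟨R, hR, hKR⟩ := (hp.isCompact_preimage
    (isCompact_closedBall (0 : E) (‖v‖ + ‖v - ∇ f 0‖))).isBounded.exists_pos_norm_le
  suffices v ∈ closure (range (∇ f)) by
    rwa [hp.isClosedMap.isClosed_range.closure_eq] at this
  refine Metric.mem_closure_iff.mpr fun δ hδ => ?_
  set ε := δ / (2 * R)
  have hε : 0 < ε := by positivity
  obtain ⟨z, hz⟩ := hf.exists_gradient_add_smul_eq hd hε v
  have hεz := hf.mul_norm_le_of_gradient_add_smul_eq hd hz
  have hgz : ∇ f z = v - ε • z := eq_sub_of_add_eq hz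
  have hzR : ‖z‖ ≤ R := by
    refine hKR z ?_
    rw [mem_preimage, mem_closedBall_zero_iff, hgz]
    refine (norm_sub_le _ _).trans ?_
    rw [norm_smul, Real.norm_of_nonneg hε.le]
    linarith
  refine ⟨∇ f z, mem_range_self z, ?_⟩
  rw [dist_eq_norm, hgz, sub_sub_cancel, norm_smul, Real.norm_of_nonneg hε.le]
  calc ε * ‖z‖ ≤ ε * R := by gcongr
    _ < δ := by
      simp only [ε]
      field_simp
      linarith

end Surjectivity

section Conjugate

variable {n : ℕ} {φ : EuclideanSpace ℝ (Fin n) → ℝ}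

theorem LegendreType.isHomeomorph_gradient (hleg : LegendreType φ) (hφ : ContDiff ℝ 1 φ)
    (hconv : StrictConvexOn ℝ univ φ) : IsHomeomorph (∇ φ) := by
  have hd : Differentiable ℝ φ := hφ.differentiable one_ne_zero
  have hcont : Continuous (∇ φ) :=
    (toDual ℝ _).symm.continuous.comp (hφ.continuous_fderiv one_ne_zero)
  have hp : IsProperMap (∇ φ) := isProperMap_iff_tendsto_cocompact.mpr
    ⟨hcont, tendsto_cocompact_of_tendsto_dist_comp_atTop 0 <| by
      simp only [dist_zero_right]
      exact hleg⟩
  refine isHomeomorph_iff_continuous_isClosedMap_bijective.mpr ⟨hcont, hp.isClosedMap, ?_, ?_⟩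
  · exact injOn_univ.mp (hconv.injOn_gradient fun x _ => hd x)
  · exact hconv.convexOn.surjective_gradient_s6 hd hp

theorem fenchel_gradient (hφ : ConvexOn ℝ univ φ) {z : EuclideanSpace ℝ (Fin n)}
    (hd : DifferentiableAt ℝ φ z) : fenchel φ (∇ φ z) = ⟪∇ φ z, z⟫ - φ z := by
  have hle : ∀ z', ⟪∇ φ z, z'⟫ - φ z' ≤ ⟪∇ φ z, z⟫ - φ z := fun z' => by
    have := hφ.inner_gradient_le (mem_univ z) (mem_univ z') hd
    rw [inner_sub_right] at this
    linarith
  exact le_antisymm (ciSup_le hle) (le_ciSup ⟨_, forall_mem_range.mpr hle⟩ z)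

theorem hasGradientAt_fenchel_s6 (hφ : ConvexOn ℝ univ φ) (hd : Differentiable ℝ φ)
    {g : EuclideanSpace ℝ (Fin n) → EuclideanSpace ℝ (Fin n)} (hg : ∀ w, ∇ φ (g w) = w)
    {w : EuclideanSpace ℝ (Fin n)} (hgc : ContinuousAt g w) :
    HasGradientAt (fenchel φ) (g w) w := by
  have hconj : ∀ w, fenchel φ w = ⟪w, g w⟫ - φ (g w) := fun w => by
    simpa [hg] using fenchel_gradient hφ (hd (g w))
  -- two gradient inequalities squeeze the remainder between `0` and `⟪w' - w, g w' - g w⟫`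
  have hrem : ∀ w',
      |fenchel φ w' - fenchel φ w - ⟪g w, w' - w⟫| ≤ ‖w' - w‖ * ‖g w' - g w‖ := by
    intro w'
    have h₁ := hφ.inner_gradient_le (mem_univ (g w')) (mem_univ (g w)) (hd _)
    have h₂ := hφ.inner_gradient_le (mem_univ (g w)) (mem_univ (g w')) (hd _)
    have h₃ := real_inner_le_norm (w' - w) (g w' - g w)
    rw [hg] at h₁ h₂
    rw [hconj, hconj, abs_le]
    simp only [inner_sub_left, inner_sub_right, real_inner_comm] at h₁ h₂ h₃ ⊢
    constructor <;> linarith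
  rw [hasGradientAt_iff_hasFDerivAt, hasFDerivAt_iff_isLittleO, Asymptotics.isLittleO_iff]
  intro c hc
  filter_upwards [hgc (Metric.closedBall_mem_nhds (g w) hc)] with w' hw'
  rw [toDual_apply_apply, Real.norm_eq_abs]
  calc _ ≤ ‖w' - w‖ * ‖g w' - g w‖ := hrem w'
    _ ≤ c * ‖w' - w‖ := by
      rw [mul_comm]
      gcongr
      exact mem_closedBall_iff_norm.mp hw'

theorem HasGradientAt.bregman {ψ : EuclideanSpace ℝ (Fin n) → ℝ}
    {ψ' z z' : EuclideanSpace ℝ (Fin n)} (h : HasGradientAt ψ ψ' z) :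
    HasGradientAt (fun z => bregman ψ z z') (ψ' - ∇ ψ z') z := by
  rw [hasGradientAt_iff_hasFDerivAt] at h ⊢
  have hlin : HasFDerivAt (fun z => ⟪∇ ψ z', z - z'⟫) (innerSL ℝ (∇ ψ z')) z :=
    ((innerSL ℝ (∇ ψ z')).hasFDerivAt.comp z ((hasFDerivAt_id z).sub_const z')).congr_fderiv
      (ContinuousLinearMap.comp_id _)
  exact ((h.sub_const (ψ z')).sub hlin).congr_fderiv (by ext; simp)

end Conjugate

/-- along the mirror-descent closed loop, with `y(t) = ∇φ*(x(t))`,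
`(d/dt) V(x(t)) ≤ f(ȳ) − f(y(t)) ≤ 0`, and `(d/dt) V(x(t)) < 0` whenever `x(t) ≠ x̄`. -/
theorem lyapunov_decrease {n : ℕ} (f φ : EuclideanSpace ℝ (Fin n) → ℝ)
    (hf : ContDiff ℝ 1 f) (hfconv : StrictConvexOn ℝ Set.univ f)
    (ybar : EuclideanSpace ℝ (Fin n)) (hmin : ∀ z, f ybar ≤ f z)
    (hφ : ContDiff ℝ 2 φ) (hφconv : StrictConvexOn ℝ Set.univ φ)
    (hleg : LegendreType φ)
    (xbar : EuclideanSpace ℝ (Fin n)) (hxbar : xbar = gradient φ ybar)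
    (V : EuclideanSpace ℝ (Fin n) → ℝ)
    (hV : V = fun x => bregman (fenchel φ) x xbar)
    (x : ℝ → EuclideanSpace ℝ (Fin n)) (y : ℝ → EuclideanSpace ℝ (Fin n))
    (hode : ∀ t : ℝ, 0 ≤ t →
      HasDerivAt x (-gradient f (gradient (fenchel φ) (x t))) t)
    (hy : y = fun t => gradient (fenchel φ) (x t)) :
    ∀ t : ℝ, 0 ≤ t →
      deriv (fun s => V (x s)) t ≤ f ybar - f (y t) ∧
      f ybar - f (y t) ≤ 0 ∧
      (x t ≠ xbar → deriv (fun s => V (x s)) t < 0) := by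
  obtain ⟨e, he⟩ := isHomeomorph_iff_exists_homeomorph.mp
    (hleg.isHomeomorph_gradient (hφ.of_le one_le_two) hφconv)
  have hdφ : Differentiable ℝ φ := hφ.differentiable two_ne_zero
  have hconj : ∀ w, HasGradientAt (fenchel φ) (e.symm w) w := fun w =>
    hasGradientAt_fenchel_s6 hφconv.convexOn hdφ (fun w => by rw [← he, e.apply_symm_apply])
      e.symm.continuous.continuousAt
  have hgrad : ∇ (fenchel φ) = e.symm := gradient_eq hconj
  have hybar : e.symm xbar = ybar := by rw [hxbar, ← he, e.symm_apply_apply]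
  have hdf : Differentiable ℝ f := hf.differentiable one_ne_zero
  subst hV hy
  intro t ht
  have hderiv : HasDerivAt (fun s => bregman (fenchel φ) (x s) xbar)
      ⟪∇ f (e.symm (x t)), ybar - e.symm (x t)⟫ t := by
    have := ((hconj (x t)).bregman (z' := xbar)).comp_hasDerivAt (hode t ht)
    rwa [hgrad, hybar, inner_neg_right, ← inner_neg_left, neg_sub, real_inner_comm] at this
  simp only [hderiv.deriv, hgrad]
  refine ⟨hfconv.convexOn.inner_gradient_le (mem_univ _) (mem_univ _) (hdf _),
    sub_nonpos.mpr (hmin _), fun hne => ?_⟩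
  have hy_ne : e.symm (x t) ≠ ybar := hybar ▸ e.symm.injective.ne hne
  linarith [hfconv.inner_gradient_lt (mem_univ _) (mem_univ _) hy_ne (hdf _), hmin (e.symm (x t))]
end
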